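/- arXiv:2408.03924 — 3 statements merged into one kernel-verified Lean document; each statement's English description precedes it below -/
import Mathlib

section
/- Convolution lemma for divided differences of the exponential: for every integer q ≥ 1, every index j with 0 ≤ j ≤ q−1, every tuple (x_0, …, x_q) of real numbers and every real β, one has ∫_0^β e^{-τ[x_{j+1}, …, x_q]} · e^{-(β−τ)[x_0, …, x_j]} dτ = − e^{-β[x_0, …, x_q]}. -/
open scoped BigOperators

/-- Complete homogeneous symmetric polynomial of degree `m` in the entries of the list `l`:
`h_m(x_0, …, x_q) = Σ_{k_0+⋯+k_q = m} x_0^{k_0}⋯x_q^{k_q}` (with `h_0 = 1`). -/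
noncomputable def hsymm (l : List ℝ) (m : ℕ) : ℝ :=
  ∑ k ∈ Finset.Nat.antidiagonalTuple l.length m, ∏ i : Fin l.length, l.get i ^ k i

/-- Divided difference of the exponential `e^{t[x_0, …, x_q]}` over the tuple given by the
list `l` (of length `q+1`), defined by its (absolutely convergent) series
`Σ_{m=0}^∞ (t^{q+m}/(q+m)!) · h_m(x_0, …, x_q)`; by convention it is `0` on the empty tuple. -/
noncomputable def dde (t : ℝ) (l : List ℝ) : ℝ :=
  if l.length = 0 then 0
  else ∑' m : ℕ, t ^ (l.length - 1 + m) / (Nat.factorial (l.length - 1 + m)) * hsymm l m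

/-- The sub-tuple `[x_a, …, x_b]` of the sequence `x`, as a list (empty if `b < a`). -/
def seg (x : ℕ → ℝ) (a b : ℕ) : List ℝ :=
  (List.range (b + 1 - a)).map (fun i => x (a + i))

/-!
Both divided differences are exponential generating functions: `e^{t[x_0, …, x_q]}` is
`∑ₖ cₖ tᵏ / k!` where `∑ₖ cₖ Xᵏ = X^q · ∑ₘ hₘ(x_0, …, x_q) Xᵐ`, and the generating series of the
complete homogeneous polynomials is multiplicative under concatenation of tuples. The Beta integral
`∫₀^β τ^a (β - τ)^b dτ = a! b! / (a + b + 1)! · β^{a+b+1}` turns the convolution of the generating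
functions of `P` and `Q` into the generating function of `X · P · Q`, the termwise integration being
justified by absolute convergence. The sign comes from the substitution `τ ↦ -τ`.
-/

open Finset PowerSeries
open scoped Nat

theorem integral_pow_mul_sub_pow (β : ℝ) (a b : ℕ) :
    ∫ τ in (0 : ℝ)..β, τ ^ a * (β - τ) ^ b = a ! * b ! / (a + b + 1)! * β ^ (a + b + 1) := by
  induction b generalizing a with
  | zero =>
    simp only [pow_zero, mul_one, integral_pow, Nat.factorial_zero, Nat.cast_one, add_zero,
      Nat.factorial_succ, Nat.cast_mul]
    field_simp
    push_cast
    ring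
  | succ b ih =>
    have hsplit : ∀ τ : ℝ, τ ^ a * (β - τ) ^ (b + 1)
        = β * (τ ^ a * (β - τ) ^ b) - τ ^ (a + 1) * (β - τ) ^ b := fun τ => by ring
    simp_rw [hsplit]
    rw [intervalIntegral.integral_sub ((by fun_prop : Continuous _).intervalIntegrable _ _)
      ((by fun_prop : Continuous _).intervalIntegrable _ _), intervalIntegral.integral_const_mul,
      ih, ih, show a + 1 + b + 1 = a + (b + 1) + 1 by ring]
    simp only [Nat.factorial_succ, Nat.cast_mul, Nat.cast_add, Nat.cast_one,
      show a + (b + 1) = a + b + 1 by ring]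
    field_simp
    ring

lemma HasSum.sum_antidiagonal {α : Type*} [AddCommMonoid α] [TopologicalSpace α]
    [ContinuousAdd α] [RegularSpace α] {f : ℕ × ℕ → α} {a : α} (hf : HasSum f a) :
    HasSum (fun n => ∑ ij ∈ antidiagonal n, f ij) a :=
  (HasAntidiagonal.sigmaAntidiagonalEquivProd.hasSum_iff.mpr hf).sigma fun n =>
    (antidiagonal n).hasSum f

noncomputable def egf (p : ℝ⟦X⟧) (t : ℝ) : ℝ := ∑' k, coeff k p * t ^ k / k !

lemma summable_norm_egf_term_of_abs_le {p : ℝ⟦X⟧} {r t : ℝ}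
    (hp : Summable fun k => |coeff k p| * |r| ^ k / k !) (ht : |t| ≤ |r|) :
    Summable fun k => ‖coeff k p * t ^ k / (k ! : ℝ)‖ :=
  hp.of_nonneg_of_le (fun _ => norm_nonneg _) fun k => by
    rw [Real.norm_eq_abs, abs_div, abs_mul, abs_pow, Nat.abs_cast]
    gcongr

lemma integral_egf_term_mul_egf_term (p q : ℝ⟦X⟧) (β : ℝ) (i j : ℕ) :
    ∫ τ in (0 : ℝ)..β, coeff i p * τ ^ i / i ! * (coeff j q * (β - τ) ^ j / j !)
      = coeff i p * coeff j q * β ^ (i + j + 1) / (i + j + 1)! := by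
  have hτ : ∀ τ : ℝ, coeff i p * τ ^ i / i ! * (coeff j q * (β - τ) ^ j / j !)
      = coeff i p * coeff j q / (i ! * j !) * (τ ^ i * (β - τ) ^ j) := fun τ => by ring
  simp_rw [hτ]
  rw [intervalIntegral.integral_const_mul, integral_pow_mul_sub_pow]
  field_simp

lemma hasSum_integral_egf_mul_egf_sub {p q : ℝ⟦X⟧} {β : ℝ}
    (hp : Summable fun k => |coeff k p| * |β| ^ k / k !)
    (hq : Summable fun k => |coeff k q| * |β| ^ k / k !) :
    HasSum
      (fun ij : ℕ × ℕ => coeff ij.1 p * coeff ij.2 q * β ^ (ij.1 + ij.2 + 1) / (ij.1 + ij.2 + 1)!)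
      (∫ τ in (0 : ℝ)..β, egf p τ * egf q (β - τ)) := by
  have hbound : ∀ t ∈ Set.uIoc (0 : ℝ) β, |t| ≤ |β| ∧ |β - t| ≤ |β| := fun t ht => by
    simpa using And.intro (Set.abs_sub_left_of_mem_uIcc (Set.uIoc_subset_uIcc ht))
      (Set.abs_sub_right_of_mem_uIcc (Set.uIoc_subset_uIcc ht))
  simp_rw [← integral_egf_term_mul_egf_term]
  refine intervalIntegral.hasSum_integral_of_dominated_convergence
    (fun ij _ => |coeff ij.1 p| * |β| ^ ij.1 / ij.1 ! * (|coeff ij.2 q| * |β| ^ ij.2 / ij.2 !))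
    (fun _ => (by fun_prop : Continuous _).aestronglyMeasurable)
    (fun ij => Filter.Eventually.of_forall fun t ht => ?_)
    (Filter.Eventually.of_forall fun _ _ => hp.mul_of_nonneg hq (fun _ => by positivity)
      fun _ => by positivity)
    intervalIntegrable_const
    (Filter.Eventually.of_forall fun t ht => ?_)
  · obtain ⟨h₁, h₂⟩ := hbound t ht
    rw [Real.norm_eq_abs, abs_mul, abs_div, abs_div, abs_mul, abs_mul, abs_pow, abs_pow,
      Nat.abs_cast, Nat.abs_cast]
    gcongr
  · obtain ⟨h₁, h₂⟩ := hbound t ht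
    have hp' := summable_norm_egf_term_of_abs_le hp h₁
    have hq' := summable_norm_egf_term_of_abs_le hq h₂
    exact (summable_mul_of_summable_norm hp' hq').hasSum_iff.mpr
      (tsum_mul_tsum_of_summable_norm hp' hq').symm

theorem integral_egf_mul_egf_sub {p q : ℝ⟦X⟧} {β : ℝ}
    (hp : Summable fun k => |coeff k p| * |β| ^ k / k !)
    (hq : Summable fun k => |coeff k q| * |β| ^ k / k !) :
    ∫ τ in (0 : ℝ)..β, egf p τ * egf q (β - τ) = egf (X * (p * q)) β := by
  have hsum := (hasSum_integral_egf_mul_egf_sub hp hq).sum_antidiagonal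
  have hcoeff : ∀ n, ∑ ij ∈ antidiagonal n,
      coeff ij.1 p * coeff ij.2 q * β ^ (ij.1 + ij.2 + 1) / (ij.1 + ij.2 + 1)!
      = coeff (n + 1) (X * (p * q)) * β ^ (n + 1) / (n + 1)! := by
    intro n
    rw [coeff_succ_X_mul, coeff_mul, sum_mul, sum_div]
    exact sum_congr rfl fun ij hij => by rw [mem_antidiagonal.mp hij]
  simp_rw [hcoeff] at hsum
  refine ((hasSum_nat_add_iff' 1).mp ?_).tsum_eq.symm
  simpa using hsum

theorem integral_egf_neg_mul_egf_neg {p q : ℝ⟦X⟧} {β : ℝ}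
    (hp : Summable fun k => |coeff k p| * |β| ^ k / k !)
    (hq : Summable fun k => |coeff k q| * |β| ^ k / k !) :
    ∫ τ in (0 : ℝ)..β, egf p (-τ) * egf q (-(β - τ)) = -egf (X * (p * q)) (-β) := by
  rw [← abs_neg] at hp hq
  rw [← integral_egf_mul_egf_sub hp hq, intervalIntegral.integral_symm, neg_inj,
    ← neg_zero, ← intervalIntegral.integral_comp_neg, neg_zero]
  congr 1 with τ
  ring_nf

lemma sum_antidiagonalTuple_succ {M : Type*} [AddCommMonoid M] (k n : ℕ)
    (f : (Fin (k + 1) → ℕ) → M) :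
    ∑ x ∈ Finset.Nat.antidiagonalTuple (k + 1) n, f x
      = ∑ p ∈ antidiagonal n, ∑ x ∈ Finset.Nat.antidiagonalTuple k p.2, f (Fin.cons p.1 x) := by
  simp only [Finset.sum, Finset.Nat.antidiagonalTuple, Multiset.Nat.antidiagonalTuple,
    List.Nat.antidiagonalTuple, Multiset.map_coe, Multiset.sum_coe]
  change _ = (Multiset.map _ (Multiset.Nat.antidiagonal n)).sum
  simp [Multiset.Nat.antidiagonal, List.flatMap, List.sum_flatten, Function.comp_def]

lemma hsymm_nil (m : ℕ) : hsymm [] m = if m = 0 then 1 else 0 := by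
  cases m <;> simp [hsymm, Finset.Nat.antidiagonalTuple_zero_zero,
    Finset.Nat.antidiagonalTuple_zero_succ]

lemma hsymm_cons (a : ℝ) (l : List ℝ) (m : ℕ) :
    hsymm (a :: l) m = ∑ p ∈ antidiagonal m, a ^ p.1 * hsymm l p.2 := by
  simp only [hsymm, List.length_cons, sum_antidiagonalTuple_succ, mul_sum, Fin.prod_univ_succ]
  rfl

lemma abs_hsymm_le (l : List ℝ) (m : ℕ) : |hsymm l m| ≤ (l.map abs).sum ^ m := by
  induction l generalizing m with
  | nil => cases m <;> simp [hsymm_nil]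
  | cons a l ih =>
    have hS : 0 ≤ (l.map abs).sum := List.sum_nonneg (by simp)
    rw [hsymm_cons, List.map_cons, List.sum_cons, (Commute.all _ _).add_pow']
    refine (abs_sum_le_sum_abs _ _).trans (sum_le_sum fun p hp => ?_)
    have hchoose : (1 : ℝ) ≤ m.choose p.1 := by
      exact_mod_cast Nat.choose_pos (by have := mem_antidiagonal.mp hp; omega)
    calc |a ^ p.1 * hsymm l p.2| ≤ |a| ^ p.1 * (l.map abs).sum ^ p.2 := by
          rw [abs_mul, abs_pow]; gcongr; exact ih _
      _ ≤ m.choose p.1 • (|a| ^ p.1 * (l.map abs).sum ^ p.2) := by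
          rw [nsmul_eq_mul]; exact le_mul_of_one_le_left (by positivity) hchoose

noncomputable def hsymmSeries (l : List ℝ) : ℝ⟦X⟧ := mk (hsymm l)

lemma hsymmSeries_nil : hsymmSeries [] = 1 := by
  ext m
  simp [hsymmSeries, hsymm_nil, coeff_one]

lemma hsymmSeries_cons (a : ℝ) (l : List ℝ) :
    hsymmSeries (a :: l) = mk (a ^ ·) * hsymmSeries l := by
  ext m
  simp [hsymmSeries, hsymm_cons, coeff_mul]

lemma hsymmSeries_append (l₁ l₂ : List ℝ) :
    hsymmSeries (l₁ ++ l₂) = hsymmSeries l₁ * hsymmSeries l₂ := by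
  induction l₁ with
  | nil => rw [List.nil_append, hsymmSeries_nil, one_mul]
  | cons a l ih => rw [List.cons_append, hsymmSeries_cons, hsymmSeries_cons, ih, mul_assoc]
noncomputable def ddeSeries (l : List ℝ) : ℝ⟦X⟧ := X ^ (l.length - 1) * hsymmSeries l

lemma coeff_ddeSeries (l : List ℝ) (k : ℕ) :
    coeff k (ddeSeries l) = if l.length - 1 ≤ k then hsymm l (k - (l.length - 1)) else 0 := by
  simp [ddeSeries, coeff_X_pow_mul', hsymmSeries]

lemma ddeSeries_append {l₁ l₂ : List ℝ} (h₁ : l₁ ≠ []) (h₂ : l₂ ≠ []) :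
    ddeSeries (l₁ ++ l₂) = X * (ddeSeries l₁ * ddeSeries l₂) := by
  have hlen : (l₁ ++ l₂).length - 1 = 1 + (l₁.length - 1) + (l₂.length - 1) := by
    simp only [List.length_append]
    have := List.length_pos_of_ne_nil h₁
    have := List.length_pos_of_ne_nil h₂
    omega
  rw [ddeSeries, ddeSeries, ddeSeries, hsymmSeries_append, hlen, pow_add, pow_add, pow_one]
  ring

lemma abs_coeff_ddeSeries_le (l : List ℝ) (k : ℕ) :
    |coeff k (ddeSeries l)| ≤ ((l.map abs).sum + 1) ^ k := by
  have hS : 0 ≤ (l.map abs).sum := List.sum_nonneg (by simp)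
  rw [coeff_ddeSeries]
  split_ifs
  · calc |hsymm l (k - (l.length - 1))| ≤ (l.map abs).sum ^ (k - (l.length - 1)) :=
          abs_hsymm_le l _
      _ ≤ ((l.map abs).sum + 1) ^ (k - (l.length - 1)) := by gcongr; linarith
      _ ≤ ((l.map abs).sum + 1) ^ k := pow_le_pow_right₀ (by linarith) (Nat.sub_le _ _)
  · simp only [abs_zero]; positivity

lemma summable_abs_coeff_ddeSeries (l : List ℝ) (r : ℝ) :
    Summable fun k => |coeff k (ddeSeries l)| * |r| ^ k / k ! :=
  (Real.summable_pow_div_factorial (((l.map abs).sum + 1) * |r|)).of_nonneg_of_le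
    (fun _ => by positivity) fun k => by
      rw [mul_pow]; gcongr; exact abs_coeff_ddeSeries_le l k

lemma dde_eq_egf {l : List ℝ} (hl : l ≠ []) (t : ℝ) : dde t l = egf (ddeSeries l) t := by
  have hsupp : Function.support (fun k => coeff k (ddeSeries l) * t ^ k / k !)
      ⊆ Set.range (l.length - 1 + ·) := by
    refine Function.support_subset_iff'.mpr fun k hk => ?_
    rw [coeff_ddeSeries, if_neg (fun h => hk ⟨k - (l.length - 1), Nat.add_sub_cancel' h⟩),
      zero_mul, zero_div]
  rw [dde, if_neg (by simpa using hl), egf, ← (add_right_injective _).tsum_eq hsupp]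
  refine tsum_congr fun m => ?_
  rw [coeff_ddeSeries, if_pos (Nat.le_add_right _ _), Nat.add_sub_cancel_left]
  ring

lemma seg_ne_nil (x : ℕ → ℝ) {a b : ℕ} (h : a ≤ b) : seg x a b ≠ [] := by
  simp only [seg, ne_eq, List.map_eq_nil_iff, List.range_eq_nil]
  omega

lemma seg_append_seg (x : ℕ → ℝ) {a b c : ℕ} (hab : a ≤ b + 1) (hbc : b ≤ c) :
    seg x a b ++ seg x (b + 1) c = seg x a c := by
  rw [seg, seg, seg, show c + 1 - a = (b + 1 - a) + (c + 1 - (b + 1)) by omega, List.range_add,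
    List.map_append, List.map_map]
  congr 1
  refine List.map_congr_left fun i _ => ?_
  simp only [Function.comp_apply]
  congr 1
  omega

/-- **Convolution lemma** (Lemma 1): for `q ≥ 1`, `0 ≤ j ≤ q−1`, any tuple `(x_0, …, x_q)` and
any real `β`, `∫_0^β e^{-τ[x_{j+1},…,x_q]} · e^{-(β−τ)[x_0,…,x_j]} dτ = − e^{-β[x_0,…,x_q]}`. -/
theorem convolution_lemma (q j : ℕ) (hq : 1 ≤ q) (hj : j ≤ q - 1) (x : ℕ → ℝ) (β : ℝ) :
    ∫ τ in (0:ℝ)..β, dde (-τ) (seg x (j + 1) q) * dde (-(β - τ)) (seg x 0 j)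
      = - dde (-β) (seg x 0 q) := by
  have hH : seg x 0 j ≠ [] := seg_ne_nil x (Nat.zero_le j)
  have hT : seg x (j + 1) q ≠ [] := seg_ne_nil x (by omega)
  simp_rw [dde_eq_egf hT, dde_eq_egf hH]
  rw [← seg_append_seg x (Nat.zero_le _) (by omega : j ≤ q),
    dde_eq_egf (List.append_ne_nil_of_left_ne_nil hH _), ddeSeries_append hH hT,
    mul_comm (ddeSeries _)]
  exact integral_egf_neg_mul_egf_neg (summable_abs_coeff_ddeSeries _ β)
    (summable_abs_coeff_ddeSeries _ β)
end

section
/- Weighted repeated-argument sum simplification: for every integer q ≥ 0, every tuple (x_0, …, x_q) of real numbers and every real τ, one has Σ_{j=0}^{q} x_j · e^{-τ[x_0, …, x_q, x_j]} = τ · (d/dτ) e^{-τ[x_0, …, x_q]} − q · e^{-τ[x_0, …, x_q]}, where [x_0, …, x_q, x_j] denotes the tuple (x_0, …, x_q) with x_j appended (so it has length q+2 and argument x_j repeated). -/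
open scoped BigOperators

/-!
Write `h_m(l)` for the complete homogeneous polynomial of the tuple `l`. Splitting off the
appended argument gives `h_m(l, y) = Σ_{i ≤ m} y^i h_{m-i}(l)`, and counting monomials gives the
Newton-type identity `Σ_j x_j h_m(l, x_j) = (m+1) h_{m+1}(l)`. Hence the left side is the series
`Σ_m m (-τ)^{q+m}/(q+m)! h_m(l)`. On the right, `τ d/dτ` multiplies the `m`-th term of
`e^{-τ[l]}` by its degree `q+m`; subtracting `q e^{-τ[l]}` leaves the same series.
-/

namespace Finset.Nat

theorem le_of_mem_antidiagonalTuple {n m : ℕ} {k : Fin n → ℕ} (hk : k ∈ antidiagonalTuple n m)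
    (i : Fin n) : k i ≤ m :=
  mem_antidiagonalTuple.1 hk ▸ Finset.single_le_sum (fun _ _ => Nat.zero_le _) (Finset.mem_univ i)

theorem card_antidiagonalTuple_le (n m : ℕ) : (antidiagonalTuple n m).card ≤ (m + 1) ^ n := by
  calc (antidiagonalTuple n m).card
      ≤ (Fintype.piFinset fun _ : Fin n => Finset.range (m + 1)).card :=
        Finset.card_le_card fun k hk => Fintype.mem_piFinset.2 fun i =>
          Finset.mem_range.2 (Nat.lt_succ_of_le (le_of_mem_antidiagonalTuple hk i))
    _ = (m + 1) ^ n := by simp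

end Finset.Nat

namespace Fin

variable {n : ℕ}

/-- `hsymm` for a tuple indexed by `Fin n`, so that `hsymm l = Fin.hsymm l.get` definitionally. -/
noncomputable def hsymm (v : Fin n → ℝ) (m : ℕ) : ℝ :=
  ∑ k ∈ Finset.Nat.antidiagonalTuple n m, ∏ i, v i ^ k i

theorem pow_mul_hsymm_sub (v : Fin n → ℝ) (j : Fin n) {c m : ℕ} (hcm : c ≤ m) :
    v j ^ c * hsymm v (m - c)
      = ∑ k ∈ (Finset.Nat.antidiagonalTuple n m).filter (c ≤ · j), ∏ i, v i ^ k i := by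
  have sub_add_single {k : Fin n → ℕ} (hk : c ≤ k j) : k - Pi.single j c + Pi.single j c = k :=
    tsub_add_cancel_of_le fun i => by rcases eq_or_ne i j with rfl | h <;> simp [*]
  have prod_pow_single : ∏ i, v i ^ Pi.single (M := fun _ => ℕ) j c i = v j ^ c := by
    rw [Fintype.prod_eq_single j fun i hi => by simp [hi], Pi.single_eq_same]
  rw [hsymm, Finset.mul_sum]
  refine Finset.sum_nbij' (· + Pi.single j c) (· - Pi.single j c) ?_ ?_ ?_ ?_ ?_
  · intro k hk
    simp_all [Finset.Nat.mem_antidiagonalTuple, Finset.sum_add_distrib]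
  · intro k hk
    rw [Finset.mem_filter, Finset.Nat.mem_antidiagonalTuple] at hk
    have := congr_arg (∑ i, · i) (sub_add_single hk.2)
    simp only [Pi.add_apply, Finset.sum_add_distrib, Finset.sum_pi_single', Finset.mem_univ,
      if_true] at this
    rw [Finset.Nat.mem_antidiagonalTuple]
    omega
  · intro k _
    simp
  · intro k hk
    rw [Finset.mem_filter] at hk
    exact sub_add_single hk.2
  · intro k _
    simp only [Pi.add_apply, pow_add, Finset.prod_mul_distrib, prod_pow_single, mul_comm]

/-- `v j ^ (i + 1) * hsymm v (m - i)` sums the degree-`(m + 1)` monomials `v ^ k` with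
`i + 1 ≤ k j`, so summing over `i` counts each `v ^ k` exactly `k j` times. -/
theorem sum_pow_succ_mul_hsymm (v : Fin n → ℝ) (j : Fin n) (m : ℕ) :
    ∑ i ∈ Finset.range (m + 1), v j ^ (i + 1) * hsymm v (m - i)
      = ∑ k ∈ Finset.Nat.antidiagonalTuple n (m + 1), (k j : ℝ) * ∏ i, v i ^ k i := by
  calc ∑ i ∈ Finset.range (m + 1), v j ^ (i + 1) * hsymm v (m - i)
      = ∑ i ∈ Finset.range (m + 1), ∑ k ∈ Finset.Nat.antidiagonalTuple n (m + 1),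
          if i + 1 ≤ k j then ∏ i, v i ^ k i else 0 := by
        refine Finset.sum_congr rfl fun i hi => ?_
        rw [← Finset.sum_filter, show m - i = m + 1 - (i + 1) by omega,
          pow_mul_hsymm_sub v j (by simpa using hi)]
    _ = _ := by
        rw [Finset.sum_comm]
        refine Finset.sum_congr rfl fun k hk => ?_
        have hkj := Finset.Nat.le_of_mem_antidiagonalTuple hk j
        rw [← Finset.sum_filter, Finset.sum_const, nsmul_eq_mul]
        have : (Finset.range (m + 1)).filter (· + 1 ≤ k j) = Finset.range (k j) := by
          ext i
          simp only [Finset.mem_filter, Finset.mem_range]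
          omega
        rw [this, Finset.card_range]

theorem hsymm_snoc (v : Fin n → ℝ) (y : ℝ) (m : ℕ) :
    hsymm (snoc v y) m = ∑ i ∈ Finset.range (m + 1), y ^ i * hsymm v (m - i) := by
  simp only [hsymm, Finset.mul_sum]
  rw [Finset.sum_sigma']
  refine (Finset.sum_nbij' (fun p => snoc p.2 p.1) (fun k => ⟨k (last n), init k⟩)
    ?_ ?_ ?_ ?_ ?_).symm
  · intro p hp
    rw [Finset.mem_sigma, Finset.mem_range, Finset.Nat.mem_antidiagonalTuple] at hp
    rw [Finset.Nat.mem_antidiagonalTuple, sum_univ_castSucc]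
    simp only [snoc_castSucc, snoc_last]
    omega
  · intro k hk
    rw [Finset.Nat.mem_antidiagonalTuple, sum_univ_castSucc] at hk
    rw [Finset.mem_sigma, Finset.mem_range, Finset.Nat.mem_antidiagonalTuple]
    simp only [init]
    omega
  · intro p _
    simp [init_snoc]
  · intro k _
    simp [snoc_init_self]
  · intro p _
    simp only [prod_univ_castSucc, snoc_castSucc, snoc_last]
    ring

theorem sum_mul_hsymm_snoc (v : Fin n → ℝ) (m : ℕ) :
    ∑ j, v j * hsymm (snoc v (v j)) m = (m + 1) * hsymm v (m + 1) := by
  calc ∑ j, v j * hsymm (snoc v (v j)) m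
      = ∑ j, ∑ i ∈ Finset.range (m + 1), v j ^ (i + 1) * hsymm v (m - i) := by
        simp only [hsymm_snoc, Finset.mul_sum, pow_succ']
        simp only [mul_assoc]
    _ = ∑ k ∈ Finset.Nat.antidiagonalTuple n (m + 1), (∑ j, (k j : ℝ)) * ∏ i, v i ^ k i := by
        simp only [sum_pow_succ_mul_hsymm, Finset.sum_mul]
        exact Finset.sum_comm
    _ = (m + 1) * hsymm v (m + 1) := by
        rw [hsymm, Finset.mul_sum]
        refine Finset.sum_congr rfl fun k hk => ?_
        rw [← Nat.cast_sum, Finset.Nat.mem_antidiagonalTuple.1 hk]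
        push_cast
        ring

theorem hsymm_comp_cast {n' : ℕ} (h : n = n') (v : Fin n' → ℝ) (m : ℕ) :
    hsymm (v ∘ Fin.cast h) m = hsymm v m := by
  subst h; rfl

theorem abs_hsymm_le (v : Fin n → ℝ) {B : ℝ} (hB0 : 0 ≤ B) (hB : ∀ i, |v i| ≤ B) (m : ℕ) :
    |hsymm v m| ≤ (2 ^ n * B) ^ m := by
  have abs_prod_le {k : Fin n → ℕ} (hk : k ∈ Finset.Nat.antidiagonalTuple n m) :
      |∏ i, v i ^ k i| ≤ B ^ m := by
    rw [Finset.abs_prod, ← Finset.Nat.mem_antidiagonalTuple.1 hk, ← Finset.prod_pow_eq_pow_sum]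
    exact Finset.prod_le_prod (fun i _ => abs_nonneg _) fun i _ =>
      (abs_pow (v i) (k i)).trans_le (pow_le_pow_left₀ (abs_nonneg _) (hB i) _)
  have card_le : ((Finset.Nat.antidiagonalTuple n m).card : ℝ) ≤ (2 ^ m) ^ n := by
    exact_mod_cast (Finset.Nat.card_antidiagonalTuple_le n m).trans
      (Nat.pow_le_pow_left m.lt_two_pow_self n)
  calc |hsymm v m| ≤ ∑ k ∈ Finset.Nat.antidiagonalTuple n m, B ^ m :=
        (Finset.abs_sum_le_sum_abs _ _).trans (Finset.sum_le_sum fun k hk => abs_prod_le hk)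
    _ ≤ (2 ^ m) ^ n * B ^ m := by
        rw [Finset.sum_const, nsmul_eq_mul]
        gcongr
    _ = (2 ^ n * B) ^ m := by rw [mul_pow, ← pow_mul, ← pow_mul, mul_comm m]

end Fin

theorem hsymm_append_singleton (l : List ℝ) (y : ℝ) (m : ℕ) :
    hsymm (l ++ [y]) m = Fin.hsymm (Fin.snoc l.get y) m := by
  rw [← Fin.hsymm_comp_cast (by simp : (l ++ [y]).length = l.length + 1)]
  show Fin.hsymm (l ++ [y]).get m = _
  congr 1
  funext i
  simp [Fin.snoc, List.getElem_append]

theorem sum_map_mul_hsymm_append (l : List ℝ) (m : ℕ) :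
    (l.map fun y => y * hsymm (l ++ [y]) m).sum = (m + 1) * hsymm l (m + 1) := by
  rw [← Fin.sum_univ_fun_getElem]
  simp only [hsymm_append_singleton]
  exact Fin.sum_mul_hsymm_snoc l.get m

theorem sum_range_mul_hsymm_seg_append (x : ℕ → ℝ) (q m : ℕ) :
    ∑ j ∈ Finset.range (q + 1), x j * hsymm (seg x 0 q ++ [x j]) m
      = (m + 1) * hsymm (seg x 0 q) (m + 1) := by
  rw [← sum_map_mul_hsymm_append]
  simp [seg, Finset.sum_eq_multiset_sum, Multiset.range, Function.comp_def]

theorem exists_abs_hsymm_le_pow (l : List ℝ) : ∃ C : ℝ, ∀ m, |hsymm l m| ≤ C ^ m :=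
  ⟨_, Fin.abs_hsymm_le l.get (Finset.sum_nonneg fun i _ => abs_nonneg (l.get i))
    fun i => Finset.single_le_sum (fun i _ => abs_nonneg (l.get i)) (Finset.mem_univ i)⟩

section Series

open Nat

variable {c : ℕ → ℝ} {C : ℝ}

theorem abs_mul_pow_div_factorial_mul_le (hc : ∀ m, |c m| ≤ C ^ m)
    {q m k w : ℕ} (hk : k ≤ q + m) (hw : w ≤ 2 ^ (q + m)) {t R : ℝ} (hR : 1 ≤ R)
    (ht : |t| ≤ R) :
    |w * t ^ k / (q + m)! * c m| ≤ (2 * R) ^ q * ((2 * R * C) ^ m / m !) := by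
  have hC : 0 ≤ C ^ m := (abs_nonneg _).trans (hc m)
  have htk : |t| ^ k ≤ R ^ (q + m) :=
    (pow_le_pow_left₀ (abs_nonneg t) ht k).trans (pow_le_pow_right₀ hR hk)
  have hfac : (m ! : ℝ) ≤ (q + m)! := by exact_mod_cast factorial_le (le_add_left le_rfl)
  calc |w * t ^ k / (q + m)! * c m| = w * |t| ^ k / (q + m)! * |c m| := by
        simp [abs_mul, abs_div, abs_pow]
    _ ≤ 2 ^ (q + m) * R ^ (q + m) / m ! * C ^ m := by
        gcongr
        · exact_mod_cast hw
        · exact hc m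
    _ = (2 * R) ^ q * ((2 * R * C) ^ m / m !) := by
        rw [mul_pow, mul_pow, mul_pow, pow_add, pow_add]; ring

theorem summable_mul_pow_div_factorial_mul (hc : ∀ m, |c m| ≤ C ^ m)
    (q : ℕ) {w k : ℕ → ℕ} (hw : ∀ m, w m ≤ 2 ^ (q + m)) (hk : ∀ m, k m ≤ q + m)
    (t : ℝ) : Summable fun m => (w m : ℝ) * t ^ k m / (q + m)! * c m :=
  .of_norm_bounded ((Real.summable_pow_div_factorial _).mul_left _) fun m =>
    abs_mul_pow_div_factorial_mul_le hc (hk m) (hw m) (le_max_left 1 |t|) (le_max_right 1 |t|)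

theorem hasDerivAt_tsum_pow_div_factorial_mul (hc : ∀ m, |c m| ≤ C ^ m) (q : ℕ) (t : ℝ) :
    HasDerivAt (fun s => ∑' m, s ^ (q + m) / (q + m)! * c m)
      (∑' m, ((q + m : ℕ) : ℝ) * t ^ (q + m - 1) / (q + m)! * c m) t := by
  set R := |t| + 1
  have hR : 1 ≤ R := le_add_of_nonneg_left (abs_nonneg t)
  have ht : t ∈ Metric.ball 0 R := by simp [R]
  refine hasDerivAt_tsum_of_isPreconnected ((Real.summable_pow_div_factorial (2 * R * C)).mul_left
      ((2 * R) ^ q)) Metric.isOpen_ball (convex_ball 0 R).isPreconnected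
    (fun m s _ => ((hasDerivAt_pow (q + m) s).div_const _).mul_const _)
    (fun m s hs => ?_) ht ?_ ht
  · refine abs_mul_pow_div_factorial_mul_le hc (Nat.sub_le _ _) ?_ hR ?_
    · exact (q + m).lt_two_pow_self.le
    · simpa using (mem_ball_zero_iff.1 hs).le
  · simpa using summable_mul_pow_div_factorial_mul hc q (w := fun _ => 1) (k := fun m => q + m)
      (fun _ => Nat.one_le_two_pow) (fun _ => le_rfl) t

theorem mul_deriv_tsum_pow_div_factorial_mul (hc : ∀ m, |c m| ≤ C ^ m) (q : ℕ) (t : ℝ) :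
    t * deriv (fun s => ∑' m, s ^ (q + m) / (q + m)! * c m) t
      = ∑' m, ((q + m : ℕ) : ℝ) * t ^ (q + m) / (q + m)! * c m := by
  rw [(hasDerivAt_tsum_pow_div_factorial_mul hc q t).deriv, ← tsum_mul_left]
  refine tsum_congr fun m => ?_
  rcases (q + m).eq_zero_or_eq_succ_pred with h | h
  · simp [h]
  · rw [h]
    simp only [succ_sub_one, pow_succ]
    ring

theorem mul_deriv_sub_mul_tsum_pow_div_factorial_mul (hc : ∀ m, |c m| ≤ C ^ m) (q : ℕ)
    (t : ℝ) :
    t * deriv (fun s => ∑' m, s ^ (q + m) / (q + m)! * c m) t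
        - q * ∑' m, t ^ (q + m) / (q + m)! * c m
      = ∑' m, ((m + 1 : ℕ) : ℝ) * t ^ (q + (m + 1)) / (q + (m + 1))! * c (m + 1) := by
  have summable_weighted (w : ℕ → ℕ) (hw : ∀ m, w m ≤ 2 ^ (q + m)) :=
    summable_mul_pow_div_factorial_mul hc q hw (fun _ => le_rfl) t
  have summable_term : Summable fun m => t ^ (q + m) / (q + m)! * c m := by
    simpa using summable_weighted 1 fun _ => Nat.one_le_two_pow
  rw [mul_deriv_tsum_pow_div_factorial_mul hc, ← tsum_mul_left,
    ← (summable_weighted _ fun m => (q + m).lt_two_pow_self.le).tsum_sub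
      (summable_term.mul_left (q : ℝ))]
  refine (tsum_congr fun m => ?_).trans ((summable_weighted id fun m => m.lt_two_pow_self.le.trans
    (Nat.pow_le_pow_right two_pos (le_add_left m q))).tsum_eq_zero_add.trans (by simp))
  push_cast [id]
  ring

theorem dde_eq_tsum {l : List ℝ} {q : ℕ} (hl : l.length = q + 1) (t : ℝ) :
    dde t l = ∑' m, t ^ (q + m) / (q + m)! * hsymm l m := by
  simp [dde, hl]

theorem sum_range_mul_dde_seg_append (x : ℕ → ℝ) (q : ℕ) (t : ℝ) :
    ∑ j ∈ Finset.range (q + 1), x j * dde t (seg x 0 q ++ [x j])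
      = ∑' m, ((m + 1 : ℕ) : ℝ) * t ^ (q + (m + 1)) / (q + (m + 1))!
          * hsymm (seg x 0 q) (m + 1) := by
  have hlen (j : ℕ) : (seg x 0 q ++ [x j]).length = q + 1 + 1 := by simp [seg]
  have summable (j : ℕ) :
      Summable fun m => x j * (t ^ (q + 1 + m) / (q + 1 + m)! * hsymm (seg x 0 q ++ [x j]) m) := by
    obtain ⟨C, hC⟩ := exists_abs_hsymm_le_pow (seg x 0 q ++ [x j])
    simpa using (summable_mul_pow_div_factorial_mul hC (q + 1) (w := 1)
      (fun _ => Nat.one_le_two_pow) (fun _ => le_rfl) t).mul_left (x j)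
  simp only [dde_eq_tsum (hlen _), ← tsum_mul_left]
  rw [← Summable.tsum_finsetSum fun j _ => summable j]
  refine tsum_congr fun m => ?_
  rw [show q + (m + 1) = q + 1 + m by ring]
  calc ∑ j ∈ Finset.range (q + 1),
        x j * (t ^ (q + 1 + m) / (q + 1 + m)! * hsymm (seg x 0 q ++ [x j]) m)
      = t ^ (q + 1 + m) / (q + 1 + m)!
          * ∑ j ∈ Finset.range (q + 1), x j * hsymm (seg x 0 q ++ [x j]) m := by
        rw [Finset.mul_sum]
        exact Finset.sum_congr rfl fun j _ => by ring
    _ = _ := by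
        rw [sum_range_mul_hsymm_seg_append]
        push_cast
        ring

end Series

/-- **Weighted, repeated-argument sum simplification** (Lemma 2): for every `q ≥ 0`, tuple
`(x_0, …, x_q)` and real `τ`,
`Σ_{j=0}^{q} x_j e^{-τ[x_0,…,x_q,x_j]} = (τ ∂/∂τ − q) e^{-τ[x_0,…,x_q]}`. -/
theorem weighted_repeatedarg_sum (q : ℕ) (x : ℕ → ℝ) (τ : ℝ) :
    ∑ j ∈ Finset.range (q + 1), x j * dde (-τ) (seg x 0 q ++ [x j])
      = τ * deriv (fun t : ℝ => dde (-t) (seg x 0 q)) τ - q * dde (-τ) (seg x 0 q) := by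
  obtain ⟨C, hC⟩ := exists_abs_hsymm_le_pow (seg x 0 q)
  set F : ℝ → ℝ := fun s => ∑' m, s ^ (q + m) / (q + m).factorial * hsymm (seg x 0 q) m
  have hdde (t : ℝ) : dde t (seg x 0 q) = F t := dde_eq_tsum (by simp [seg]) t
  rw [sum_range_mul_dde_seg_append, show (fun t => dde (-t) (seg x 0 q)) = fun t => F (-t) from
    funext fun t => hdde (-t), deriv_comp_neg, hdde, mul_neg, ← neg_mul,
    mul_deriv_sub_mul_tsum_pow_div_factorial_mul hC]
end

section
/- Integral representation of the ground-state fidelity susceptibility: under the stated assumptions, the function τ ↦ τ·G(τ) is integrable on (0, ∞) and ∫_0^∞ τ · G(τ) dτ = Σ_{n=1}^{N−1} |⟨ψ_n, A ψ_0⟩|² / (E_n − E_0)², i.e. it equals the spectral fidelity susceptibility χ_F = Σ_{n≠0} |⟨ψ_n, A ψ_0⟩|² / (E_n − E_0)². -/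
/-!
Expanding in the eigenbasis of `H`, `G(τ) = ∑ₙ |⟨ψₙ, A ψ₀⟩|² e^{-(Eₙ - E₀) τ} - ⟨ψ₀, A ψ₀⟩²`, and
the `n = 0` term cancels the disconnected part because `⟨ψ₀, A ψ₀⟩` is real. Every remaining term
decays exponentially by the spectral gap, and `∫₀^∞ τ e^{-a τ} dτ = Γ(2) / a² = 1 / a²`.
-/

open scoped InnerProductSpace
open MeasureTheory Set

theorem NormedSpace.exp_apply_of_apply_eq_smul {𝕂 E : Type*} [RCLike 𝕂] [NormedAddCommGroup E]
    [NormedSpace 𝕂 E] [CompleteSpace E] (T : E →L[𝕂] E) {x : E} {c : 𝕂} (h : T x = c • x) :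
    exp T x = exp c • x := by
  have hpow (n : ℕ) : (T ^ n) x = c ^ n • x := by
    induction n with
    | zero => simp
    | succ n ih => rw [pow_succ', mul_apply_eq_comp, ih, map_smul, h, smul_smul, pow_succ]
  refine ((exp_series_hasSum_exp' (𝕂 := 𝕂) T).mapL (ContinuousLinearMap.apply 𝕂 E x)).unique ?_
  convert (exp_series_hasSum_exp' (𝕂 := 𝕂) c).smul_const x using 2 with n
  simp [hpow, smul_smul]

section Eigenbasis

variable {V : Type*} [NormedAddCommGroup V] [InnerProductSpace ℂ V] [CompleteSpace V]
  {H A : V →L[ℂ] V}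

theorem inner_exp_ofReal_smul_apply_of_apply_eq_smul (hH : IsSelfAdjoint H) {v : V} {e : ℝ}
    (hv : H v = (e : ℂ) • v) (t : ℝ) (y : V) :
    ⟪v, NormedSpace.exp ((t : ℂ) • H) y⟫_ℂ = Complex.exp (t * e) * ⟪v, y⟫_ℂ := by
  have hexp : IsSelfAdjoint (NormedSpace.exp ((t : ℂ) • H)) :=
    (IsSelfAdjoint.smul (Complex.conj_ofReal t) hH).exp
  have hexpv : NormedSpace.exp ((t : ℂ) • H) v = Complex.exp (t * e) • v := by
    rw [Complex.exp_eq_exp_ℂ]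
    exact NormedSpace.exp_apply_of_apply_eq_smul _ <| by rw [smul_apply, hv, smul_smul]
  rw [← hexp.isSymmetric.apply_clm, hexpv, inner_smul_left, ← Complex.ofReal_mul,
    ← Complex.ofReal_exp, Complex.conj_ofReal]

noncomputable def connectedCorrelator (H A : V →L[ℂ] V) (x : V) (τ : ℝ) : ℂ :=
  ⟪x, (NormedSpace.exp ((τ : ℂ) • H) * A * NormedSpace.exp (-(τ : ℂ) • H)) (A x)⟫_ℂ
    - ⟪x, A x⟫_ℂ ^ 2

variable {ι : Type*} [Fintype ι]

theorem inner_exp_mul_mul_exp_neg_apply_eq_sum (hH : IsSelfAdjoint H) (hA : IsSelfAdjoint A)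
    (ψ : OrthonormalBasis ι ℂ V) (E : ι → ℝ) (heig : ∀ n, H (ψ n) = (E n : ℂ) • ψ n)
    (i₀ : ι) (τ : ℝ) :
    ⟪ψ i₀, (NormedSpace.exp ((τ : ℂ) • H) * A * NormedSpace.exp (-(τ : ℂ) • H)) (A (ψ i₀))⟫_ℂ
      = ∑ n, ((‖⟪ψ n, A (ψ i₀)⟫_ℂ‖ ^ 2 * Real.exp (-((E n - E i₀) * τ)) : ℝ) : ℂ) := by
  have hneg : -(τ : ℂ) • H = ((-τ : ℝ) : ℂ) • H := by push_cast; rfl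
  calc _ = Complex.exp (τ * E i₀) *
        ⟪A (ψ i₀), NormedSpace.exp (((-τ : ℝ) : ℂ) • H) (A (ψ i₀))⟫_ℂ := by
        rw [mul_apply_eq_comp, mul_apply_eq_comp,
          inner_exp_ofReal_smul_apply_of_apply_eq_smul hH (heig i₀), ← hA.isSymmetric.apply_clm,
          hneg]
    _ = ∑ n, Complex.exp (τ * E i₀) *
        (⟪A (ψ i₀), ψ n⟫_ℂ * (Complex.exp (-τ * E n) * ⟪ψ n, A (ψ i₀)⟫_ℂ)) := by
        rw [← ψ.sum_inner_mul_inner, Finset.mul_sum]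
        refine Finset.sum_congr rfl fun n _ => ?_
        rw [inner_exp_ofReal_smul_apply_of_apply_eq_smul hH (heig n)]
        push_cast; rfl
    _ = _ := by
        refine Finset.sum_congr rfl fun n _ => ?_
        push_cast
        rw [← inner_conj_symm, ← Complex.conj_mul',
          show -((E n - E i₀ : ℂ) * τ) = τ * E i₀ + -τ * E n by ring, Complex.exp_add]
        ring

theorem connectedCorrelator_eq_sum [DecidableEq ι] (hH : IsSelfAdjoint H) (hA : IsSelfAdjoint A)
    (ψ : OrthonormalBasis ι ℂ V) (E : ι → ℝ) (heig : ∀ n, H (ψ n) = (E n : ℂ) • ψ n)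
    (i₀ : ι) (τ : ℝ) :
    connectedCorrelator H A (ψ i₀) τ
      = ((∑ n ∈ Finset.univ.erase i₀,
          ‖⟪ψ n, A (ψ i₀)⟫_ℂ‖ ^ 2 * Real.exp (-((E n - E i₀) * τ)) : ℝ) : ℂ) := by
  have hreal : (starRingEnd ℂ) ⟪ψ i₀, A (ψ i₀)⟫_ℂ = ⟪ψ i₀, A (ψ i₀)⟫_ℂ := by
    rw [inner_conj_symm, hA.isSymmetric.apply_clm]
  rw [connectedCorrelator, inner_exp_mul_mul_exp_neg_apply_eq_sum hH hA ψ E heig,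
    ← Finset.add_sum_erase _ _ (Finset.mem_univ i₀), Complex.ofReal_sum]
  push_cast
  rw [sub_self, zero_mul, neg_zero, Complex.exp_zero, mul_one, ← Complex.conj_mul', hreal]
  ring

end Eigenbasis

section Integrals

theorem integrableOn_Ioi_mul_exp_neg_mul {a : ℝ} (ha : 0 < a) :
    IntegrableOn (fun τ : ℝ => τ * Real.exp (-(a * τ))) (Ioi 0) := by
  simpa using integrableOn_rpow_mul_exp_neg_mul_rpow (s := 1) (p := 1) (by norm_num) one_pos ha

theorem integral_Ioi_mul_exp_neg_mul {a : ℝ} (ha : 0 < a) :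
    ∫ τ in Ioi (0 : ℝ), τ * Real.exp (-(a * τ)) = 1 / a ^ 2 := by
  have h := Real.integral_rpow_mul_exp_neg_mul_Ioi two_pos ha
  simp only [show (2 : ℝ) - 1 = 1 by norm_num, Real.rpow_one, Real.Gamma_two, mul_one] at h
  rw [h, Real.rpow_two, one_div_pow]

variable {ι : Type*} {s : Finset ι} {w a : ι → ℝ}

theorem mul_sum_exp_neg_mul_eq_sum (τ : ℝ) :
    τ * ∑ n ∈ s, w n * Real.exp (-(a n * τ)) = ∑ n ∈ s, w n * (τ * Real.exp (-(a n * τ))) := by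
  rw [Finset.mul_sum]
  exact Finset.sum_congr rfl fun n _ => mul_left_comm _ _ _

theorem integrableOn_Ioi_mul_sum_exp_neg_mul (ha : ∀ n ∈ s, 0 < a n) :
    IntegrableOn (fun τ : ℝ => τ * ∑ n ∈ s, w n * Real.exp (-(a n * τ))) (Ioi 0) := by
  simp_rw [mul_sum_exp_neg_mul_eq_sum]
  exact integrable_finsetSum _ fun n hn => (integrableOn_Ioi_mul_exp_neg_mul (ha n hn)).const_mul _

theorem integral_Ioi_mul_sum_exp_neg_mul (ha : ∀ n ∈ s, 0 < a n) :
    ∫ τ in Ioi (0 : ℝ), τ * ∑ n ∈ s, w n * Real.exp (-(a n * τ)) = ∑ n ∈ s, w n / a n ^ 2 := by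
  simp_rw [mul_sum_exp_neg_mul_eq_sum]
  rw [integral_finsetSum _ fun n hn => (integrableOn_Ioi_mul_exp_neg_mul (ha n hn)).const_mul _]
  refine Finset.sum_congr rfl fun n hn => ?_
  rw [integral_const_mul, integral_Ioi_mul_exp_neg_mul (ha n hn), mul_one_div]

end Integrals

/-- **Integral representation of the ground-state fidelity susceptibility**: let `V` be a
finite-dimensional complex inner product space of dimension `N ≥ 1`, `H` a self-adjoint
operator with orthonormal eigenbasis `ψ`, `H ψ_n = E_n ψ_n`, nondegenerate ground state
`E_0 < E_n` (`n ≠ 0`), and `A` self-adjoint. Then `τ ↦ τ·G(τ)`, with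
`G(τ) = ⟨ψ_0, e^{τH} A e^{−τH} A ψ_0⟩ − ⟨ψ_0, A ψ_0⟩²`, is integrable on `(0, ∞)` and
`∫_0^∞ τ G(τ) dτ = Σ_{n≠0} |⟨ψ_n, A ψ_0⟩|² / (E_n − E_0)² = χ_F`. -/
theorem integral_representation_fidelity_susceptibility
    {V : Type*} [NormedAddCommGroup V] [InnerProductSpace ℂ V] [FiniteDimensional ℂ V]
    (N : ℕ) (hN : 1 ≤ N)
    (H A : V →L[ℂ] V) (hH : IsSelfAdjoint H) (hA : IsSelfAdjoint A)
    (ψ : OrthonormalBasis (Fin N) ℂ V) (E : Fin N → ℝ)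
    (heig : ∀ n, H (ψ n) = (E n : ℂ) • ψ n)
    (hground : ∀ n : Fin N, n ≠ ⟨0, hN⟩ → E ⟨0, hN⟩ < E n) :
    IntegrableOn (fun τ : ℝ =>
        (τ : ℂ) * (⟪ψ ⟨0, hN⟩,
            (NormedSpace.exp ((τ : ℂ) • H) * A * NormedSpace.exp (-(τ : ℂ) • H))
              (A (ψ ⟨0, hN⟩))⟫_ℂ
          - ⟪ψ ⟨0, hN⟩, A (ψ ⟨0, hN⟩)⟫_ℂ ^ 2)) (Set.Ioi 0)
      ∧ ∫ τ in Set.Ioi (0:ℝ),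
          (τ : ℂ) * (⟪ψ ⟨0, hN⟩,
              (NormedSpace.exp ((τ : ℂ) • H) * A * NormedSpace.exp (-(τ : ℂ) • H))
                (A (ψ ⟨0, hN⟩))⟫_ℂ
            - ⟪ψ ⟨0, hN⟩, A (ψ ⟨0, hN⟩)⟫_ℂ ^ 2)
        = ((∑ n ∈ Finset.univ.erase ⟨0, hN⟩,
              ‖⟪ψ n, A (ψ ⟨0, hN⟩)⟫_ℂ‖ ^ 2 / (E n - E ⟨0, hN⟩) ^ 2 : ℝ) : ℂ) := by
  set i₀ : Fin N := ⟨0, hN⟩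
  have hgap : ∀ n ∈ Finset.univ.erase i₀, 0 < E n - E i₀ := fun n hn =>
    sub_pos.2 (hground n (Finset.ne_of_mem_erase hn))
  have hG : (fun τ : ℝ => (τ : ℂ) * connectedCorrelator H A (ψ i₀) τ) = fun τ : ℝ =>
      ((τ * ∑ n ∈ Finset.univ.erase i₀,
        ‖⟪ψ n, A (ψ i₀)⟫_ℂ‖ ^ 2 * Real.exp (-((E n - E i₀) * τ)) : ℝ) : ℂ) := by
    ext τ
    rw [connectedCorrelator_eq_sum hH hA ψ E heig, Complex.ofReal_mul]
  simp only [connectedCorrelator] at hG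
  rw [hG, integral_complex_ofReal, integral_Ioi_mul_sum_exp_neg_mul hgap]
  exact ⟨(integrableOn_Ioi_mul_sum_exp_neg_mul hgap).ofReal, rfl⟩
end
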